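/- Let $0<\tau<\beta$, $\alpha\ge0$ with $\tau q\alpha<\tfrac12$ for some $q>0$, and let $\varphi_\beta(y)=\frac{1}{2\beta^{1/\beta}\Gamma(1+1/\beta)}e^{-|y|^{\beta}/\beta}$. Then $\int_{\mathbb R}\exp\big(q\alpha|y|^{\tau}\big)\,\varphi_\beta(y)\,dy\le \exp\Big(\big(1+\tfrac{\tau}{\beta}\big)q\alpha\Big)$. -/

import Mathlib

open MeasureTheory

/-!
Young's inequality `|y|^τ ≤ (τ/β) |y|^β + (1 - τ/β)` bounds the integrand by
`exp ((1 - τ/β) q α)` times `exp (τ q α / β · |y|^β) φ_β(y)`, whose integral is exactly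
`(1 - τ q α)^(-1/β)` by the Gamma-function formula for `∫ exp (-b |y|^β)`. Finally
`(1 - x)⁻¹ ≤ 1 + 2x ≤ exp (2x)` for `0 ≤ x ≤ 1/2`.
-/

/-- The generalized `β`-Gaussian probability density on `ℝ`. -/
noncomputable def phiBeta (β y : ℝ) : ℝ :=
  1 / (2 * β ^ (1 / β) * Real.Gamma (1 + 1 / β)) * Real.exp (-|y| ^ β / β)

open Real Set

theorem integral_exp_neg_mul_abs_rpow {p b : ℝ} (hp : 0 < p) (hb : 0 < b) :
    ∫ x : ℝ, exp (-b * |x| ^ p) = 2 * b ^ (-1 / p) * Gamma (1 / p + 1) := by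
  rw [integral_comp_abs (f := fun x => exp (-b * x ^ p)), integral_exp_neg_mul_rpow hp hb,
    mul_assoc]

lemma exp_mul_abs_rpow_mul_phiBeta (β s y : ℝ) :
    exp (s / β * |y| ^ β) * phiBeta β y
      = 1 / (2 * β ^ (1 / β) * Gamma (1 + 1 / β)) * exp (-((1 - s) / β) * |y| ^ β) := by
  rw [phiBeta, mul_left_comm, ← exp_add]
  congr 2
  ring

lemma phiBeta_nonneg {β : ℝ} (hβ : 0 < β) (y : ℝ) : 0 ≤ phiBeta β y := by
  have : 0 < Gamma (1 + 1 / β) := Gamma_pos_of_pos (by positivity)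
  unfold phiBeta
  positivity

theorem integral_exp_mul_abs_rpow_mul_phiBeta {β s : ℝ} (hβ : 0 < β) (hs : s < 1) :
    ∫ y, exp (s / β * |y| ^ β) * phiBeta β y = (1 - s) ^ (-1 / β) := by
  have hs' : 0 < 1 - s := by linarith
  simp_rw [exp_mul_abs_rpow_mul_phiBeta]
  rw [integral_const_mul, integral_exp_neg_mul_abs_rpow hβ (div_pos hs' hβ),
    div_rpow hs'.le hβ.le, neg_div, rpow_neg hβ.le, add_comm (1 / β) 1]
  have : 0 < Gamma (1 + 1 / β) := Gamma_pos_of_pos (by positivity)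
  have : 0 < β ^ (1 / β) := by positivity
  field_simp

theorem rpow_le_div_mul_rpow_add_one_sub {t τ β : ℝ} (ht : 0 ≤ t) (hτ : 0 < τ)
    (hτβ : τ ≤ β) :
    t ^ τ ≤ τ / β * t ^ β + (1 - τ / β) := by
  have hβ : 0 < β := hτ.trans_le hτβ
  have := geom_mean_le_arith_mean2_weighted (p₁ := t ^ β) (p₂ := 1) (div_nonneg hτ.le hβ.le)
    (sub_nonneg.mpr ((div_le_one hβ).mpr hτβ)) (by positivity) zero_le_one (by ring)
  rwa [one_rpow, mul_one, mul_one, ← rpow_mul ht, mul_div_cancel₀ _ hβ.ne'] at this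

theorem integral_exp_mul_abs_rpow_mul_phiBeta_le {β τ a : ℝ} (hτ : 0 < τ) (hτβ : τ ≤ β)
    (ha : 0 ≤ a) (hτa : τ * a < 1) :
    ∫ y, exp (a * |y| ^ τ) * phiBeta β y
      ≤ exp ((1 - τ / β) * a) * (1 - τ * a) ^ (-1 / β) := by
  have hβ : 0 < β := hτ.trans_le hτβ
  have hyoung (y : ℝ) :
      exp (a * |y| ^ τ) ≤ exp ((1 - τ / β) * a) * exp (τ * a / β * |y| ^ β) := by
    rw [← exp_add, exp_le_exp]
    calc a * |y| ^ τ ≤ a * (τ / β * |y| ^ β + (1 - τ / β)) :=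
          mul_le_mul_of_nonneg_left (rpow_le_div_mul_rpow_add_one_sub (abs_nonneg y) hτ hτβ) ha
      _ = (1 - τ / β) * a + τ * a / β * |y| ^ β := by ring
  have hint : Integrable fun y => exp (τ * a / β * |y| ^ β) * phiBeta β y :=
    .of_integral_ne_zero <| by
      rw [integral_exp_mul_abs_rpow_mul_phiBeta hβ hτa]
      exact (rpow_pos_of_pos (by linarith) _).ne'
  calc ∫ y, exp (a * |y| ^ τ) * phiBeta β y
      ≤ ∫ y, exp ((1 - τ / β) * a) * (exp (τ * a / β * |y| ^ β) * phiBeta β y) := by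
        refine integral_mono_of_nonneg (.of_forall fun y => by positivity [phiBeta_nonneg hβ y])
          (hint.const_mul _) (.of_forall fun y => ?_)
        beta_reduce
        rw [← mul_assoc]
        exact mul_le_mul_of_nonneg_right (hyoung y) (phiBeta_nonneg hβ y)
    _ = exp ((1 - τ / β) * a) * (1 - τ * a) ^ (-1 / β) := by
        rw [integral_const_mul, integral_exp_mul_abs_rpow_mul_phiBeta hβ hτa]

lemma inv_one_sub_le_exp_two_mul {x : ℝ} (hx₀ : 0 ≤ x) (hx : x ≤ 1 / 2) :
    (1 - x)⁻¹ ≤ exp (2 * x) := by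
  calc (1 - x)⁻¹ ≤ 1 + 2 * x := by
        rw [inv_le_iff_one_le_mul₀ (by linarith)]; nlinarith
    _ ≤ exp (2 * x) := by linarith [add_one_le_exp (2 * x)]

lemma one_sub_rpow_neg_le_exp {x p : ℝ} (hx₀ : 0 ≤ x) (hx : x ≤ 1 / 2) (hp : 0 ≤ p) :
    (1 - x) ^ (-p) ≤ exp (2 * x * p) := by
  rw [rpow_neg (by linarith), ← inv_rpow (by linarith), exp_mul]
  exact rpow_le_rpow (inv_nonneg.mpr (by linarith)) (inv_one_sub_le_exp_two_mul hx₀ hx) hp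

theorem stmt10 (β τ α q : ℝ) (hτ : 0 < τ) (hτβ : τ < β) (hα : 0 ≤ α)
    (hq : 0 < q) (hsmall : τ * q * α < 1 / 2) :
    ∫ y : ℝ, Real.exp (q * α * |y| ^ τ) * phiBeta β y
      ≤ Real.exp ((1 + τ / β) * q * α) := by
  have hβ : 0 < β := hτ.trans hτβ
  have hx : τ * (q * α) ≤ 1 / 2 := by rw [← mul_assoc]; exact hsmall.le
  calc ∫ y : ℝ, Real.exp (q * α * |y| ^ τ) * phiBeta β y
      ≤ exp ((1 - τ / β) * (q * α)) * (1 - τ * (q * α)) ^ (-(1 / β)) := by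
        rw [← neg_div]
        exact integral_exp_mul_abs_rpow_mul_phiBeta_le hτ hτβ.le (by positivity) (by linarith)
    _ ≤ exp ((1 - τ / β) * (q * α)) * exp (2 * (τ * (q * α)) * (1 / β)) := by
        gcongr
        exact one_sub_rpow_neg_le_exp (by positivity) hx (by positivity)
    _ = Real.exp ((1 + τ / β) * q * α) := by
        rw [← exp_add]
        congr 1
        ring
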